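/- Spectrum of the XOR-game graph adjacency matrix: let Φ̃ ∈ {−1,+1}^{m×m}, D = ∑_{x,y} Φ̃_{x,y} |x,y⟩⟨x,y| the diagonal sign matrix, and define the 2m² × 2m² matrix 𝒜 = (I_m ⊗ (J_m − I_m) + J_m ⊗ I_m) ⊗ |+⟩⟨+| − (I_m ⊗ (J_m − I_m) + D(J_m ⊗ I_m)D) ⊗ |−⟩⟨−|, where J_m is the all-ones m × m matrix and |±⟩⟨±| = (I₂ ± σ_X)/2. Then the eigenvalues of 𝒜 are: 2m−1 with multiplicity 1; m−1 with multiplicity 2m−2; −1 with multiplicity (m−1)²; 1−m±λ_z each with multiplicity 1 where λ_z (z = 1,…,m) are the singular values of Φ̃; and 1 with multiplicity m(m−2). -/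
import Mathlib
set_option maxRecDepth 8000


open Matrix Kronecker Polynomial

/-- The all-ones `m × m` matrix. -/
def Jm (m : ℕ) : Matrix (Fin m) (Fin m) ℝ := Matrix.of fun _ _ => 1

/-- The diagonal sign matrix `D = ∑_{x,y} Φ̃_{x,y} |x,y⟩⟨x,y|`. -/
def Dsign {m : ℕ} (Φ : Matrix (Fin m) (Fin m) ℝ) :
    Matrix (Fin m × Fin m) (Fin m × Fin m) ℝ :=
  Matrix.diagonal fun p => Φ p.1 p.2

/-- `|+⟩⟨+| = (I₂ + σ_X)/2`. -/
noncomputable def Pplus : Matrix (Fin 2) (Fin 2) ℝ := !![1/2, 1/2; 1/2, 1/2]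

/-- `|−⟩⟨−| = (I₂ − σ_X)/2`. -/
noncomputable def Pminus : Matrix (Fin 2) (Fin 2) ℝ := !![1/2, -(1/2); -(1/2), 1/2]

/-- The XOR-game graph adjacency matrix
`𝒜 = (I⊗(J−I) + J⊗I) ⊗ |+⟩⟨+| − (I⊗(J−I) + D(J⊗I)D) ⊗ |−⟩⟨−|`. -/
noncomputable def xorAdj {m : ℕ} (Φ : Matrix (Fin m) (Fin m) ℝ) :
    Matrix ((Fin m × Fin m) × Fin 2) ((Fin m × Fin m) × Fin 2) ℝ :=
  (((1 : Matrix (Fin m) (Fin m) ℝ) ⊗ₖ (Jm m - 1) + (Jm m) ⊗ₖ 1) ⊗ₖ Pplus)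
    - (((1 : Matrix (Fin m) (Fin m) ℝ) ⊗ₖ (Jm m - 1)
        + Dsign Φ * ((Jm m) ⊗ₖ 1) * Dsign Φ) ⊗ₖ Pminus)

section aux

variable {n k : Type*} [Fintype n] [DecidableEq n] [Fintype k] [DecidableEq k]

lemma ringHom_charpoly {S : Type*} [CommRing S] (f : ℝ[X] →+* S) (M : Matrix n n ℝ) :
    f M.charpoly = (Matrix.scalar n (f X) - M.map (fun r => f (C r))).det := by
  have h : (charmatrix M).map f = Matrix.scalar n (f X) - M.map (fun r => f (C r)) := by
    ext i j
    by_cases hij : i = j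
    · subst hij
      simp [charmatrix_apply_eq, scalar_apply, Matrix.diagonal_apply_eq]
    · simp [charmatrix_apply_ne _ _ _ hij, scalar_apply, Matrix.diagonal_apply_ne _ hij]
  rw [Matrix.charpoly, ← h,
    show (charmatrix M).map f = f.mapMatrix (charmatrix M) from rfl, ← RingHom.map_det]

lemma comp_charpoly (M : Matrix n n ℝ) (q : ℝ[X]) :
    M.charpoly.comp q = (Matrix.scalar n q - M.map (fun r => C r)).det := by
  have := ringHom_charpoly (eval₂RingHom C q) M
  simpa [Polynomial.comp] using this

lemma scalar_eq_smul_one {S : Type*} [CommRing S] (x : S) :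
    Matrix.scalar n x = x • (1 : Matrix n n S) := by
  ext i j
  by_cases hij : i = j
  · subst hij; simp
  · simp [scalar_apply, Matrix.diagonal_apply_ne _ hij, Matrix.one_apply_ne hij]

lemma det_scalar_sub_eq {S : Type*} [Field S] {p : Type*} [Fintype p] [DecidableEq p]
    {x : S} (hx0 : x ≠ 0) (W : Matrix p p S) :
    (Matrix.scalar p x - W).det = x ^ (Fintype.card p) * (1 - x⁻¹ • W).det := by
  rw [scalar_eq_smul_one, show x • (1 : Matrix p p S) - W = x • (1 - x⁻¹ • W) by
    rw [smul_sub, smul_smul, mul_inv_cancel₀ hx0, one_smul], Matrix.det_smul]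

lemma charpoly_mul_comm_pow (U : Matrix n k ℝ) (V : Matrix k n ℝ) :
    X ^ (Fintype.card k) * (U * V).charpoly = X ^ (Fintype.card n) * (V * U).charpoly := by
  set K := FractionRing ℝ[X]
  set f : ℝ[X] →+* K := algebraMap ℝ[X] K with hf
  have hinj : Function.Injective f := IsFractionRing.injective _ _
  apply hinj
  set x : K := f X with hx
  have hx0 : x ≠ 0 := by
    rw [hx, ← map_zero f]
    exact fun h => X_ne_zero (hinj h)
  set g : ℝ →+* K := f.comp C with hg
  set U' : Matrix n k K := U.map g
  set V' : Matrix k n K := V.map g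
  have hUV : (U * V).map g = U' * V' := Matrix.map_mul
  have hVU : (V * U).map g = V' * U' := Matrix.map_mul
  rw [_root_.map_mul, _root_.map_mul, map_pow, map_pow, ringHom_charpoly, ringHom_charpoly, ← hx]
  rw [show (U * V).map (fun r => f (C r)) = U' * V' from hUV,
    show (V * U).map (fun r => f (C r)) = V' * U' from hVU, det_scalar_sub_eq hx0, det_scalar_sub_eq hx0]
  rw [show (1 : Matrix n n K) - x⁻¹ • (U' * V') = 1 - (x⁻¹ • U') * V' by rw [Matrix.smul_mul],
    Matrix.det_one_sub_mul_comm,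
    show (1 : Matrix k k K) - V' * (x⁻¹ • U') = 1 - x⁻¹ • (V' * U') by rw [Matrix.mul_smul]]
  ring

lemma charmatrix_smul_one {m : ℕ} (c : ℝ) :
    charmatrix ((c : ℝ) • (1 : Matrix (Fin m) (Fin m) ℝ)) =
      Matrix.scalar (Fin m) (X - C c) := by
  ext i j
  by_cases hij : i = j
  · subst hij
    simp [charmatrix_apply_eq, scalar_apply]
  · simp [charmatrix_apply_ne _ _ _ hij, scalar_apply, Matrix.diagonal_apply_ne _ hij,
      Matrix.one_apply_ne hij]

lemma charpoly_fromBlocks_scalar {m : ℕ} (Φ : Matrix (Fin m) (Fin m) ℝ) :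
    (Matrix.fromBlocks ((m:ℝ) • 1) Φ Φᵀ ((m:ℝ) • 1)).charpoly
      = (Φᵀ * Φ).charpoly.comp ((X - C (m:ℝ))^2) := by
  set K := FractionRing ℝ[X]
  set f : ℝ[X] →+* K := algebraMap ℝ[X] K with hf
  have hinj : Function.Injective f := IsFractionRing.injective _ _
  apply hinj
  have ha0 : f (X - C (m:ℝ)) ≠ 0 := by
    rw [← map_zero f]
    exact fun h => (Polynomial.X_sub_C_ne_zero (m:ℝ)) (hinj h)
  set g : ℝ →+* K := f.comp C with hg
  set a : K := f (X - C (m:ℝ)) with ha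
  set N : Matrix (Fin m) (Fin m) K := (Φᵀ * Φ).map g with hN
  -- LHS
  have hcm : charmatrix (Matrix.fromBlocks ((m:ℝ) • 1) Φ Φᵀ ((m:ℝ) • 1)) =
      Matrix.fromBlocks (Matrix.scalar (Fin m) (X - C (m:ℝ))) (-(Φ.map Polynomial.C))
        (-((Φᵀ).map Polynomial.C)) (Matrix.scalar (Fin m) (X - C (m:ℝ))) := by
    rw [charmatrix_fromBlocks, charmatrix_smul_one]
  have hmap : (Matrix.fromBlocks (Matrix.scalar (Fin m) (X - C (m:ℝ))) (-(Φ.map Polynomial.C))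
        (-((Φᵀ).map Polynomial.C)) (Matrix.scalar (Fin m) (X - C (m:ℝ)))).map f
      = Matrix.fromBlocks (a • 1) (-(Φ.map g)) (-((Φᵀ).map g)) (a • 1) := by
    ext i j
    cases i <;> cases j <;>
      simp [Matrix.map_apply, scalar_apply, Matrix.diagonal_apply, Matrix.one_apply,
        apply_ite f, hg, ha]
  have hL : f (Matrix.fromBlocks ((m:ℝ) • 1) Φ Φᵀ ((m:ℝ) • 1)).charpoly
      = (Matrix.fromBlocks (a • 1) (-(Φ.map g)) (-((Φᵀ).map g)) (a • 1)).det := by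
    rw [Matrix.charpoly, hcm, RingHom.map_det, RingHom.mapMatrix_apply, hmap]
  -- block determinant
  letI : Invertible (a • (1 : Matrix (Fin m) (Fin m) K)) :=
    ⟨a⁻¹ • 1, by rw [Matrix.smul_mul, Matrix.mul_smul, smul_smul, Matrix.one_mul,
        inv_mul_cancel₀ ha0, one_smul], by rw [Matrix.smul_mul, Matrix.mul_smul, smul_smul,
        Matrix.one_mul, mul_inv_cancel₀ ha0, one_smul]⟩
  have hinv : ⅟(a • (1 : Matrix (Fin m) (Fin m) K)) = a⁻¹ • 1 := rfl
  have hdet : (Matrix.fromBlocks (a • 1) (-(Φ.map g)) (-((Φᵀ).map g)) (a • 1)).det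
      = ((a^2) • (1 : Matrix (Fin m) (Fin m) K) - N).det := by
    rw [Matrix.det_fromBlocks₁₁, hinv]
    have h1 : -((Φᵀ).map g) * (a⁻¹ • (1 : Matrix (Fin m) (Fin m) K)) * -(Φ.map g)
        = a⁻¹ • N := by
      rw [Matrix.mul_smul, Matrix.mul_one, Matrix.smul_mul, neg_mul_neg, hN, Matrix.map_mul]
    rw [h1]
    have h2 : a • (1 : Matrix (Fin m) (Fin m) K) - a⁻¹ • N
        = a⁻¹ • ((a^2) • (1 : Matrix (Fin m) (Fin m) K) - N) := by
      rw [smul_sub, smul_smul, sq, ← mul_assoc, inv_mul_cancel₀ ha0, one_mul]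
    rw [h2, Matrix.det_smul, Matrix.det_smul, Matrix.det_one, mul_one]
    rw [← mul_assoc, ← mul_pow, mul_inv_cancel₀ ha0, one_pow, one_mul]
  -- RHS
  have hR : f ((Φᵀ * Φ).charpoly.comp ((X - C (m:ℝ))^2))
      = ((a^2) • (1 : Matrix (Fin m) (Fin m) K) - N).det := by
    have := ringHom_charpoly (f.comp (eval₂RingHom Polynomial.C ((X - C (m:ℝ))^2))) (Φᵀ * Φ)
    simp only [RingHom.coe_comp, Function.comp_apply, coe_eval₂RingHom, eval₂_X, eval₂_C] at this
    rw [Polynomial.comp, this, ← scalar_eq_smul_one, ha, map_pow, hN]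
    rfl
  rw [hL, hdet, hR]

open Kronecker

def Kmat {m : ℕ} (Φ : Matrix (Fin m) (Fin m) ℝ) :
    Matrix (Fin m × Fin m) (Fin m × Fin m) ℝ :=
  (1 : Matrix (Fin m) (Fin m) ℝ) ⊗ₖ (Jm m) + Dsign Φ * ((Jm m) ⊗ₖ 1) * Dsign Φ

def Wmat {m : ℕ} (Φ : Matrix (Fin m) (Fin m) ℝ) :
    Matrix (Fin m × Fin m) (Fin m ⊕ Fin m) ℝ :=
  Matrix.of fun p z =>
    Sum.elim (fun x' => if p.1 = x' then 1 else 0)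
      (fun y' => if p.2 = y' then Φ p.1 p.2 else 0) z

lemma Wmat_mul_transpose {m : ℕ} (Φ : Matrix (Fin m) (Fin m) ℝ) :
    Wmat Φ * (Wmat Φ)ᵀ = Kmat Φ := by
  ext p q
  simp only [Matrix.mul_apply, Wmat, Matrix.transpose_apply, Matrix.of_apply,
    Fintype.sum_sum_type, Sum.elim_inl, Sum.elim_inr]
  simp only [Kmat, Matrix.add_apply, Matrix.kroneckerMap_apply, Jm, Matrix.of_apply,
    Dsign, Matrix.diagonal_mul, Matrix.mul_diagonal, Matrix.one_apply]
  simp [ite_and, mul_ite, ite_mul, Finset.sum_ite_eq, Finset.sum_ite_eq',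
    Prod.ext_iff, mul_comm]

lemma transpose_mul_Wmat {m : ℕ} (Φ : Matrix (Fin m) (Fin m) ℝ)
    (hΦ : ∀ x y, Φ x y = 1 ∨ Φ x y = -1) :
    (Wmat Φ)ᵀ * Wmat Φ = Matrix.fromBlocks ((m:ℝ) • 1) Φ Φᵀ ((m:ℝ) • 1) := by
  have hsq : ∀ x y, Φ x y * Φ x y = 1 := by
    intro x y
    rcases hΦ x y with h | h <;> rw [h] <;> norm_num
  ext z w
  cases z with
  | inl x₁ =>
    cases w with
    | inl x₂ =>
      simp only [Matrix.mul_apply, Wmat, Matrix.transpose_apply, Matrix.of_apply,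
        Sum.elim_inl, Matrix.fromBlocks_apply₁₁, Matrix.smul_apply, Matrix.one_apply,
        Fintype.sum_prod_type]
      simp [ite_and, Finset.sum_ite_eq, Finset.sum_ite_eq', eq_comm, smul_eq_mul]
    | inr y₂ =>
      simp only [Matrix.mul_apply, Wmat, Matrix.transpose_apply, Matrix.of_apply,
        Sum.elim_inl, Sum.elim_inr, Matrix.fromBlocks_apply₁₂, Fintype.sum_prod_type]
      simp [ite_and, mul_ite, ite_mul, Finset.sum_ite_eq, Finset.sum_ite_eq', eq_comm]
  | inr y₁ =>
    cases w with
    | inl x₂ =>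
      simp only [Matrix.mul_apply, Wmat, Matrix.transpose_apply, Matrix.of_apply,
        Sum.elim_inl, Sum.elim_inr, Matrix.fromBlocks_apply₂₁, Fintype.sum_prod_type]
      simp [ite_and, mul_ite, ite_mul, Finset.sum_ite_eq, Finset.sum_ite_eq', eq_comm]
    | inr y₂ =>
      simp only [Matrix.mul_apply, Wmat, Matrix.transpose_apply, Matrix.of_apply,
        Sum.elim_inr, Matrix.fromBlocks_apply₂₂, Matrix.smul_apply, Matrix.one_apply,
        Fintype.sum_prod_type]
      by_cases h : y₁ = y₂
      · subst h
        simp [ite_and, mul_ite, ite_mul, Finset.sum_ite_eq, Finset.sum_ite_eq', hsq,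
          smul_eq_mul]
      · simp [ite_and, mul_ite, ite_mul, Finset.sum_ite_eq, Finset.sum_ite_eq', h,
          Ne.symm h, smul_eq_mul]

lemma diff_squares (c d : ℝ) :
    ((X : ℝ[X]) - C c)^2 - C (d^2) = (X - C (c+d)) * (X - C (c-d)) := by
  simp only [C_add, C_sub, map_pow]
  ring

lemma charpoly_Kmat {m : ℕ} (hm : 2 ≤ m) (Φ : Matrix (Fin m) (Fin m) ℝ)
    (hΦ : ∀ x y, Φ x y = 1 ∨ Φ x y = -1) (lam : Fin m → ℝ)
    (hlam : (Φᵀ * Φ).charpoly = ∏ z, (X - C ((lam z) ^ 2))) :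
    (Kmat Φ).charpoly
      = X ^ (m*m - 2*m) * ∏ z, ((X - C ((m:ℝ) + lam z)) * (X - C ((m:ℝ) - lam z))) := by
  have h1 := charpoly_mul_comm_pow (Wmat Φ) (Wmat Φ)ᵀ
  rw [Wmat_mul_transpose, transpose_mul_Wmat Φ hΦ, charpoly_fromBlocks_scalar, hlam] at h1
  simp only [Fintype.card_sum, Fintype.card_prod, Fintype.card_fin] at h1
  rw [Polynomial.prod_comp] at h1
  have h2 : ∀ z : Fin m, ((X : ℝ[X]) - C (lam z ^ 2)).comp ((X - C (m:ℝ))^2)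
      = (X - C ((m:ℝ) + lam z)) * (X - C ((m:ℝ) - lam z)) := by
    intro z
    rw [sub_comp, X_comp, C_comp, diff_squares]
  simp only [h2] at h1
  have h3 : m * m = (m + m) + (m * m - 2 * m) := by
    have : 2 * m ≤ m * m := by nlinarith
    omega
  rw [h3, pow_add (X:ℝ[X]) (m+m) (m*m-2*m), mul_assoc] at h1
  exact mul_left_cancel₀ (pow_ne_zero _ Polynomial.X_ne_zero) h1

variable {p : Type*} [Fintype p] [DecidableEq p]

lemma charpoly_sub_one (M : Matrix p p ℝ) :
    (M - 1).charpoly = M.charpoly.comp (X + 1) := by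
  rw [comp_charpoly, Matrix.charpoly]
  congr 1
  ext i j
  by_cases hij : i = j
  · subst hij
    simp [charmatrix_apply_eq, scalar_apply]
    ring
  · simp [charmatrix_apply_ne _ _ _ hij, scalar_apply, Matrix.diagonal_apply_ne _ hij,
      Matrix.one_apply_ne hij]

lemma charpoly_one_sub (M : Matrix p p ℝ) :
    ((1 : Matrix p p ℝ) - M).charpoly
      = (-1)^(Fintype.card p) * M.charpoly.comp (1 - X) := by
  rw [comp_charpoly, Matrix.charpoly]
  have h : charmatrix ((1 : Matrix p p ℝ) - M)
      = -(Matrix.scalar p (1 - X) - M.map (fun r => C r)) := by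
    ext i j
    by_cases hij : i = j
    · subst hij
      simp [charmatrix_apply_eq, scalar_apply]
      ring
    · simp [charmatrix_apply_ne _ _ _ hij, scalar_apply, Matrix.diagonal_apply_ne _ hij,
        Matrix.one_apply_ne hij]
  rw [h, Matrix.det_neg, Fintype.card]

lemma charpoly_conj (P M Q : Matrix p p ℝ) (h1 : P * Q = 1) (h2 : Q * P = 1) :
    (P * M * Q).charpoly = M.charpoly := by
  have key : charmatrix (P * M * Q)
      = (P.map (fun r => C r)) * charmatrix M * (Q.map (fun r => C r)) := by
    have hP : P.map (fun r => (C r : ℝ[X])) = (C : ℝ →+* ℝ[X]).mapMatrix P := rfl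
    have hQ : Q.map (fun r => (C r : ℝ[X])) = (C : ℝ →+* ℝ[X]).mapMatrix Q := rfl
    rw [charmatrix, charmatrix, hP, hQ, Matrix.mul_sub, Matrix.sub_mul]
    congr 1
    · rw [scalar_eq_smul_one (X : ℝ[X]), Matrix.mul_smul, Matrix.smul_mul,
        Matrix.mul_one, ← _root_.map_mul, h1, _root_.map_one]
    · rw [← _root_.map_mul, ← _root_.map_mul, Matrix.mul_assoc]
  rw [Matrix.charpoly, key, Matrix.det_mul, Matrix.det_mul, Matrix.charpoly]
  have : (P.map (fun r => (C r : ℝ[X]))).det * (Q.map (fun r => (C r : ℝ[X]))).det = 1 := by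
    rw [← Matrix.det_mul, ← Matrix.map_mul (f := (C : ℝ →+* ℝ[X]))]
    · rw [h1]
      simp
  calc (P.map (fun r => (C r : ℝ[X]))).det * (charmatrix M).det
        * (Q.map (fun r => (C r : ℝ[X]))).det
      = (charmatrix M).det * ((P.map (fun r => (C r : ℝ[X]))).det
        * (Q.map (fun r => (C r : ℝ[X]))).det) := by ring
    _ = (charmatrix M).det := by rw [this, mul_one]

lemma charpoly_blockDiagonal {o : Type*} [Fintype o] [DecidableEq o]
    (M : o → Matrix p p ℝ) :
    (Matrix.blockDiagonal M).charpoly = ∏ i, (M i).charpoly := by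
  have h : charmatrix (Matrix.blockDiagonal M)
      = Matrix.blockDiagonal (fun i => charmatrix (M i)) := by
    ext ⟨i, a⟩ ⟨j, b⟩
    by_cases hab : a = b
    · subst hab
      by_cases hij : i = j
      · subst hij
        simp [Matrix.blockDiagonal_apply, charmatrix_apply_eq]
      · simp [Matrix.blockDiagonal_apply, charmatrix_apply_ne,
          charmatrix_apply, Matrix.diagonal_apply_ne, hij, Prod.ext_iff]
    · simp [Matrix.blockDiagonal_apply, charmatrix_apply, hab,
        Matrix.diagonal_apply_ne, Prod.ext_iff]
  rw [Matrix.charpoly, h, Matrix.det_blockDiagonal]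
  rfl

lemma charpoly_JtJ (k : ℕ) :
    ((Jm (k+2))ᵀ * Jm (k+2)).charpoly
      = ∏ z : Fin (k+2), (X - C ((if z = 0 then ((k:ℝ)+2) else 0) ^ 2)) := by
  set U : Matrix (Fin (k+2)) (Fin 1) ℝ := Matrix.of fun _ _ => 1 with hU
  set V : Matrix (Fin 1) (Fin (k+2)) ℝ := Matrix.of fun _ _ => ((k:ℝ)+2) with hV
  have hUV : U * V = (Jm (k+2))ᵀ * Jm (k+2) := by
    ext i j
    simp [hU, hV, Matrix.mul_apply, Jm]
  have hVU : (V * U).charpoly = X - C (((k:ℝ)+2) * ((k:ℝ)+2)) := by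
    rw [Matrix.charpoly, Matrix.det_fin_one, charmatrix_apply_eq]
    congr 1
    simp [Matrix.mul_apply, hU, hV, Finset.sum_const, mul_comm]
    ring
  have h1 := charpoly_mul_comm_pow U V
  rw [hUV, hVU] at h1
  simp only [Fintype.card_fin, pow_one] at h1
  have h2 : ∏ z : Fin (k+2), ((X : ℝ[X]) - C ((if z = 0 then ((k:ℝ)+2) else 0) ^ 2))
      = (X - C (((k:ℝ)+2) * ((k:ℝ)+2))) * X^(k+1) := by
    rw [← Finset.mul_prod_erase Finset.univ _ (Finset.mem_univ (0 : Fin (k+2)))]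
    have hc : ∀ z ∈ Finset.univ.erase (0 : Fin (k+2)),
        (X : ℝ[X]) - C ((if z = 0 then ((k:ℝ)+2) else 0) ^ 2) = X := by
      intro z hz
      rw [if_neg (Finset.ne_of_mem_erase hz)]
      simp
    rw [Finset.prod_congr rfl hc, Finset.prod_const, if_pos rfl]
    congr 1
    · congr 1
      ring
    · rw [Finset.card_erase_of_mem (Finset.mem_univ _)]
      simp
  rw [h2]
  have h3 : X ^ (k + 2) * (X - C (((k:ℝ)+2) * ((k:ℝ)+2)))
      = X * ((X - C (((k:ℝ)+2) * ((k:ℝ)+2))) * X ^ (k+1)) := by ring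
  rw [h3] at h1
  exact mul_left_cancel₀ (Polynomial.X_ne_zero) (by simpa using h1)

noncomputable def Hmat : Matrix (Fin 2) (Fin 2) ℝ := !![1, 1; 1, -1]
noncomputable def HmatInv : Matrix (Fin 2) (Fin 2) ℝ := !![1/2, 1/2; 1/2, -(1/2)]

lemma Hmat_mul_inv : Hmat * HmatInv = 1 := by
  ext i j
  fin_cases i <;> fin_cases j <;>
    norm_num [Hmat, HmatInv, Matrix.mul_apply, Fin.sum_univ_two, Matrix.one_apply]

lemma HmatInv_mul : HmatInv * Hmat = 1 := by
  ext i j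
  fin_cases i <;> fin_cases j <;>
    norm_num [Hmat, HmatInv, Matrix.mul_apply, Fin.sum_univ_two, Matrix.one_apply]

lemma H_Pplus : Hmat * Pplus * HmatInv = !![1, 0; 0, 0] := by
  ext i j
  fin_cases i <;> fin_cases j <;>
    norm_num [Hmat, HmatInv, Pplus, Matrix.mul_apply, Fin.sum_univ_two]

lemma H_Pminus : Hmat * Pminus * HmatInv = !![0, 0; 0, 1] := by
  ext i j
  fin_cases i <;> fin_cases j <;>
    norm_num [Hmat, HmatInv, Pminus, Matrix.mul_apply, Fin.sum_univ_two]

lemma kron_blockDiag {m : ℕ} (A B : Matrix (Fin m × Fin m) (Fin m × Fin m) ℝ) :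
    A ⊗ₖ !![(1:ℝ), 0; 0, 0] + B ⊗ₖ !![(0:ℝ), 0; 0, 1]
      = Matrix.blockDiagonal (fun t : Fin 2 => if t = 0 then A else B) := by
  ext ⟨i, a⟩ ⟨j, b⟩
  fin_cases a <;> fin_cases b <;>
    simp [Matrix.blockDiagonal_apply, Matrix.kroneckerMap_apply]

lemma kron_sub_right {q r : Type*} [Fintype q] [Fintype r] (A : Matrix q q ℝ) (B C : Matrix r r ℝ) :
    A ⊗ₖ (B - C) = A ⊗ₖ B - A ⊗ₖ C := by
  ext ⟨i, a⟩ ⟨j, b⟩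
  simp [Matrix.kroneckerMap_apply, mul_sub]

lemma neg_kron {q r : Type*} [Fintype q] [Fintype r] (A : Matrix q q ℝ) (B : Matrix r r ℝ) :
    (-A) ⊗ₖ B = -(A ⊗ₖ B) := by
  ext ⟨i, a⟩ ⟨j, b⟩
  simp [Matrix.kroneckerMap_apply]

lemma xorAdj_eq {m : ℕ} (Φ : Matrix (Fin m) (Fin m) ℝ) :
    xorAdj Φ = (Kmat (Jm m) - 1) ⊗ₖ Pplus - (Kmat Φ - 1) ⊗ₖ Pminus := by
  have hD : Dsign (Jm m) = 1 := by
    rw [show Dsign (Jm m) = Matrix.diagonal (fun _ => (1:ℝ)) from rfl, Matrix.diagonal_one]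
  have h1 : (1 : Matrix (Fin m) (Fin m) ℝ) ⊗ₖ (Jm m - 1)
      = (1 : Matrix (Fin m) (Fin m) ℝ) ⊗ₖ Jm m - 1 := by
    rw [kron_sub_right, Matrix.one_kronecker_one]
  rw [xorAdj, Kmat, Kmat, hD, Matrix.one_mul, Matrix.mul_one, h1, sub_add_eq_add_sub,
    sub_add_eq_add_sub]

lemma conj_xorAdj {m : ℕ} (Φ : Matrix (Fin m) (Fin m) ℝ) :
    ((1 : Matrix (Fin m × Fin m) (Fin m × Fin m) ℝ) ⊗ₖ Hmat) * xorAdj Φ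
        * ((1 : Matrix (Fin m × Fin m) (Fin m × Fin m) ℝ) ⊗ₖ HmatInv)
      = Matrix.blockDiagonal
          (fun t : Fin 2 => if t = 0 then (Kmat (Jm m) - 1) else -(Kmat Φ - 1)) := by
  rw [xorAdj_eq, Matrix.mul_sub, Matrix.sub_mul, ← Matrix.mul_kronecker_mul,
    ← Matrix.mul_kronecker_mul, ← Matrix.mul_kronecker_mul, ← Matrix.mul_kronecker_mul,
    Matrix.one_mul, Matrix.one_mul, Matrix.mul_one, Matrix.mul_one, H_Pplus, H_Pminus,
    ← kron_blockDiag (Kmat (Jm m) - 1) (-(Kmat Φ - 1)), neg_kron]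
  rw [sub_eq_add_neg]


end aux

/-- Spectrum of the XOR-game graph adjacency matrix: with `Φ̃ ∈ {±1}^{m×m}` and `λ_z` the
singular values of `Φ̃` (given via the characteristic polynomial of `Φ̃ᵀΦ̃`), the
eigenvalues of `𝒜` are `2m−1` (once), `m−1` (`2m−2` times), `−1` (`(m−1)²` times),
`1−m±λ_z` (once each), and `1` (`m(m−2)` times). -/

theorem stmt19 {m : ℕ} (hm : 2 ≤ m)
    (Φ : Matrix (Fin m) (Fin m) ℝ) (hΦ : ∀ x y, Φ x y = 1 ∨ Φ x y = -1)
    (lam : Fin m → ℝ) (hlam0 : ∀ z, 0 ≤ lam z)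
    (hlam : (Φᵀ * Φ).charpoly = ∏ z, (X - C ((lam z) ^ 2))) :
    (xorAdj Φ).charpoly =
      (X - C (2 * (m : ℝ) - 1)) * (X - C ((m : ℝ) - 1)) ^ (2 * m - 2)
        * (X - C (-1)) ^ ((m - 1) ^ 2)
        * (∏ z, ((X - C (1 - (m : ℝ) + lam z)) * (X - C (1 - (m : ℝ) - lam z))))
        * (X - C 1) ^ (m * (m - 2)) := by
  obtain ⟨k, rfl⟩ : ∃ k, m = k + 2 := ⟨m - 2, by omega⟩
  clear hm hlam0
  -- cast and exponent normalization of the target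
  have hc : ((k + 2 : ℕ) : ℝ) = (k : ℝ) + 2 := by push_cast; ring
  rw [hc]
  have he1 : 2 * (k + 2) - 2 = 2 * k + 2 := by omega
  have he2 : k + 2 - 1 = k + 1 := by omega
  have he3 : (k + 2) * (k + 2 - 2) = k * (k + 2) := by
    have : k + 2 - 2 = k := by omega
    rw [this, Nat.mul_comm]
  rw [he1, he2, he3]
  -- block diagonalization
  have hPQ : ((1 : Matrix (Fin (k+2) × Fin (k+2)) (Fin (k+2) × Fin (k+2)) ℝ) ⊗ₖ Hmat)
      * ((1 : Matrix (Fin (k+2) × Fin (k+2)) (Fin (k+2) × Fin (k+2)) ℝ) ⊗ₖ HmatInv) = 1 := by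
    rw [← Matrix.mul_kronecker_mul, Matrix.one_mul, Hmat_mul_inv, Matrix.one_kronecker_one]
  have hQP : ((1 : Matrix (Fin (k+2) × Fin (k+2)) (Fin (k+2) × Fin (k+2)) ℝ) ⊗ₖ HmatInv)
      * ((1 : Matrix (Fin (k+2) × Fin (k+2)) (Fin (k+2) × Fin (k+2)) ℝ) ⊗ₖ Hmat) = 1 := by
    rw [← Matrix.mul_kronecker_mul, Matrix.one_mul, HmatInv_mul, Matrix.one_kronecker_one]
  have hchar : (xorAdj Φ).charpoly
      = (Kmat (Jm (k+2)) - 1).charpoly * (-(Kmat Φ - 1)).charpoly := by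
    rw [← charpoly_conj _ (xorAdj Φ) _ hPQ hQP, conj_xorAdj, charpoly_blockDiagonal,
      Fin.prod_univ_two]
    norm_num
  -- the J part
  have hKJ : (Kmat (Jm (k+2))).charpoly
      = X^(k*(k+2)+1) * (X - C (2*((k:ℝ)+2))) * (X - C ((k:ℝ)+2))^(2*k+2) := by
    have h0 := charpoly_Kmat (show 2 ≤ k+2 by omega) (Jm (k+2))
      (fun x y => Or.inl rfl) (fun z => if z = 0 then ((k:ℝ)+2) else 0) (charpoly_JtJ k)
    rw [h0]
    have hE : (k+2)*(k+2) - 2*(k+2) = k*(k+2) := by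
      rw [show (k+2)*(k+2) = k*(k+2) + 2*(k+2) from by ring, Nat.add_sub_cancel]
    rw [hE]
    rw [← Finset.mul_prod_erase Finset.univ _ (Finset.mem_univ (0 : Fin (k+2)))]
    have hz0 : ((X : ℝ[X]) - C (((k+2:ℕ):ℝ) + (if (0 : Fin (k+2)) = 0 then ((k:ℝ)+2) else 0)))
        * (X - C (((k+2:ℕ):ℝ) - (if (0 : Fin (k+2)) = 0 then ((k:ℝ)+2) else 0)))
        = (X - C (2*((k:ℝ)+2))) * X := by
      rw [if_pos rfl, hc, sub_self, map_zero, sub_zero,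
        show ((k:ℝ)+2)+((k:ℝ)+2) = 2*((k:ℝ)+2) from by ring]
    have hzrest : ∀ z ∈ Finset.univ.erase (0 : Fin (k+2)),
        ((X : ℝ[X]) - C (((k+2:ℕ):ℝ) + (if z = 0 then ((k:ℝ)+2) else 0)))
          * (X - C (((k+2:ℕ):ℝ) - (if z = 0 then ((k:ℝ)+2) else 0)))
        = (X - C ((k:ℝ)+2))^2 := by
      intro z hz
      rw [if_neg (Finset.ne_of_mem_erase hz), hc, add_zero, sub_zero, pow_two]
    rw [hz0, Finset.prod_congr rfl hzrest, Finset.prod_const,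
      Finset.card_erase_of_mem (Finset.mem_univ _), Finset.card_univ, Fintype.card_fin,
      show k + 2 - 1 = k + 1 from by omega, ← pow_mul,
      show 2 * (k+1) = 2*k+2 from by ring]
    ring
  -- the Φ part and assembly
  have hA : (Kmat (Jm (k+2)) - 1).charpoly
      = (X - C (2 * ((k:ℝ)+2) - 1)) * (X - C (((k:ℝ)+2) - 1))^(2*k+2)
        * (X - C (-1))^((k+1)^2) := by
    rw [charpoly_sub_one, hKJ, mul_comp, mul_comp, pow_comp, pow_comp, sub_comp, sub_comp,
      X_comp, C_comp, C_comp]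
    have c1 : (X:ℝ[X]) + 1 - C (2*((k:ℝ)+2)) = X - C (2*((k:ℝ)+2) - 1) := by
      rw [C_sub, C_1]; ring
    have c2 : (X:ℝ[X]) + 1 - C (((k:ℝ)+2)) = X - C (((k:ℝ)+2) - 1) := by
      rw [C_sub, C_1]; ring
    rw [c1, c2, show (X:ℝ[X]) + 1 = X - C (-1) from by rw [map_neg, C_1]; ring,
      show k*(k+2)+1 = (k+1)^2 from by ring]
    ring
  have hE : (k+2)*(k+2) - 2*(k+2) = k*(k+2) := by
    rw [show (k+2)*(k+2) = k*(k+2) + 2*(k+2) from by ring, Nat.add_sub_cancel]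
  have hB : (-(Kmat Φ - 1)).charpoly
      = (∏ z, ((X - C (1 - ((k:ℝ)+2) + lam z)) * (X - C (1 - ((k:ℝ)+2) - lam z))))
        * (X - C 1)^(k*(k+2)) := by
    have hKΦ := charpoly_Kmat (show 2 ≤ k+2 by omega) Φ hΦ lam hlam
    rw [neg_sub, charpoly_one_sub, hKΦ, hE, mul_comp, pow_comp, X_comp, prod_comp]
    simp only [mul_comp, sub_comp, X_comp, C_comp]
    have c5 : ∀ z ∈ (Finset.univ : Finset (Fin (k+2))),
        ((1:ℝ[X]) - X - C (((k+2:ℕ):ℝ) + lam z)) * ((1:ℝ[X]) - X - C (((k+2:ℕ):ℝ) - lam z))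
        = (X - C (1 - ((k:ℝ)+2) + lam z)) * (X - C (1 - ((k:ℝ)+2) - lam z)) := by
      intro z _
      simp only [hc, C_add, C_sub, C_1]
      ring
    rw [Finset.prod_congr rfl c5,
      show ((1:ℝ[X]) - X) = -(X - C 1) from by rw [C_1]; ring,
      Fintype.card_prod, Fintype.card_fin]
    rw [neg_pow (X - C 1) (k*(k+2))]
    have hsgn : ((-1:ℝ[X]))^((k+2)*(k+2)) * (-1:ℝ[X])^(k*(k+2)) = 1 := by
      rw [← pow_add]
      exact Even.neg_one_pow ⟨(k+1)*(k+2), by ring⟩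
    linear_combination ((X - C 1)^(k*(k+2)) * ∏ z, ((X - C (1 - ((k:ℝ)+2) + lam z))
      * (X - C (1 - ((k:ℝ)+2) - lam z)))) * hsgn
  rw [hchar, hA, hB]
  ring
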